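/- With the notation of the Bjørling data construction: V ∈ ℝ³ a unit vector, β' ∈ ℝ³ nonzero with ⟨β', V⟩ = 0, and φ = (1/2)(β' − i β' × V). Assume V₃ ≠ ±1. Then φ₁ − i φ₂ ≠ 0, φ₃ ≠ 0, and φ₃/(φ₁ − i φ₂) = −(φ₁ + i φ₂)/φ₃; moreover the common value G₀ of these two quotients satisfies |G₀|² = (1 − V₃)/(1 + V₃), so that |G₀| < 1 if and only if V₃ > 0. -/

import Mathlib

/-!
Write `w = β' × V`. Since `β' ⟂ V` and `|V| = 1`, the vectors `β'`, `w`, `V` are pairwise orthogonal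
with `|w| = |β'|`; hence `φ = (β' − i w)/2` is isotropic, `φ₁² + φ₂² + φ₃² = 0`, which is the identity
`φ₃² = −(φ₁ − i φ₂)(φ₁ + i φ₂)` between the two quotients. Expanding `β'` and `w` in the orthogonal frame
gives `|φ₃|² = |β'|² (1 − V₃²)/4` and `|φ₁ − i φ₂|² = |β'|² (1 + V₃)²/4`, whose ratio is `(1 − V₃)/(1 + V₃)`.
-/

open Complex

theorem normSq_half_mul_sub_I_mul (x y : ℝ) :
    normSq ((1 / 2) * ((x : ℂ) - I * (y : ℂ))) = (x ^ 2 + y ^ 2) / 4 := by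
  have h : (1 / 2) * ((x : ℂ) - I * (y : ℂ)) = ((x / 2 : ℝ) : ℂ) + ((-y / 2 : ℝ) : ℂ) * I := by
    push_cast
    ring
  rw [h, normSq_add_mul_I]
  ring

theorem div_sub_I_mul_eq_neg_add_I_mul_div {z₁ z₂ z₃ : ℂ} (h : z₁ ^ 2 + z₂ ^ 2 + z₃ ^ 2 = 0)
    (h₁₂ : z₁ - I * z₂ ≠ 0) (h₃ : z₃ ≠ 0) :
    z₃ / (z₁ - I * z₂) = -((z₁ + I * z₂) / z₃) := by
  rw [neg_div', div_eq_div_iff h₁₂ h₃]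
  linear_combination h - z₂ ^ 2 * I_sq

theorem lt_one_iff_pos_of_sq_eq {r t : ℝ} (hr : 0 ≤ r) (ht : 0 < 1 + t)
    (h : r ^ 2 = (1 - t) / (1 + t)) : r < 1 ↔ 0 < t := by
  rw [← sq_lt_one_iff₀ hr, h, div_lt_one ht]
  constructor <;> intro h' <;> linarith

section BjorlingData

variable {b₁ b₂ b₃ V₁ V₂ V₃ : ℝ} {φ₁ φ₂ φ₃ : ℂ}

theorem sq_add_sq_add_sq_eq_zero_of_bjorling (hV : V₁ ^ 2 + V₂ ^ 2 + V₃ ^ 2 = 1)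
    (horth : b₁ * V₁ + b₂ * V₂ + b₃ * V₃ = 0)
    (hφ₁ : φ₁ = (1 / 2) * ((b₁ : ℂ) - I * ((b₂ * V₃ - b₃ * V₂ : ℝ) : ℂ)))
    (hφ₂ : φ₂ = (1 / 2) * ((b₂ : ℂ) - I * ((b₃ * V₁ - b₁ * V₃ : ℝ) : ℂ)))
    (hφ₃ : φ₃ = (1 / 2) * ((b₃ : ℂ) - I * ((b₁ * V₂ - b₂ * V₁ : ℝ) : ℂ))) :
    φ₁ ^ 2 + φ₂ ^ 2 + φ₃ ^ 2 = 0 := by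
  have hVc : (V₁ : ℂ) ^ 2 + (V₂ : ℂ) ^ 2 + (V₃ : ℂ) ^ 2 = 1 := by exact_mod_cast hV
  have horthc : (b₁ : ℂ) * V₁ + (b₂ : ℂ) * V₂ + (b₃ : ℂ) * V₃ = 0 := by exact_mod_cast horth
  subst hφ₁ hφ₂ hφ₃
  push_cast
  linear_combination (-((b₁ : ℂ) ^ 2 + (b₂ : ℂ) ^ 2 + (b₃ : ℂ) ^ 2) / 4) * hVc
    + (((b₁ : ℂ) * V₁ + (b₂ : ℂ) * V₂ + (b₃ : ℂ) * V₃) / 4) * horthc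
    + ((((b₂ : ℂ) * V₃ - b₃ * V₂) ^ 2 + ((b₃ : ℂ) * V₁ - b₁ * V₃) ^ 2
      + ((b₁ : ℂ) * V₂ - b₂ * V₁) ^ 2) / 4) * I_sq

theorem normSq_φ₃_of_bjorling (hV : V₁ ^ 2 + V₂ ^ 2 + V₃ ^ 2 = 1)
    (horth : b₁ * V₁ + b₂ * V₂ + b₃ * V₃ = 0)
    (hφ₃ : φ₃ = (1 / 2) * ((b₃ : ℂ) - I * ((b₁ * V₂ - b₂ * V₁ : ℝ) : ℂ))) :
    normSq φ₃ = (b₁ ^ 2 + b₂ ^ 2 + b₃ ^ 2) * (1 - V₃ ^ 2) / 4 := by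
  rw [hφ₃, normSq_half_mul_sub_I_mul]
  -- Lagrange's identity for `(b₁, b₂)` and `(V₁, V₂)`
  linear_combination ((b₃ * V₃ - b₁ * V₁ - b₂ * V₂) * horth + (b₁ ^ 2 + b₂ ^ 2) * hV) / 4

theorem normSq_φ₁_sub_I_mul_φ₂_of_bjorling (hV : V₁ ^ 2 + V₂ ^ 2 + V₃ ^ 2 = 1)
    (horth : b₁ * V₁ + b₂ * V₂ + b₃ * V₃ = 0)
    (hφ₁ : φ₁ = (1 / 2) * ((b₁ : ℂ) - I * ((b₂ * V₃ - b₃ * V₂ : ℝ) : ℂ)))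
    (hφ₂ : φ₂ = (1 / 2) * ((b₂ : ℂ) - I * ((b₃ * V₁ - b₁ * V₃ : ℝ) : ℂ))) :
    normSq (φ₁ - I * φ₂) = (b₁ ^ 2 + b₂ ^ 2 + b₃ ^ 2) * (1 + V₃) ^ 2 / 4 := by
  have hX : φ₁ - I * φ₂ = (1 / 2) * (((b₁ * (1 + V₃) - b₃ * V₁ : ℝ) : ℂ)
      - I * ((b₂ * (1 + V₃) - b₃ * V₂ : ℝ) : ℂ)) := by
    subst hφ₁ hφ₂
    push_cast
    linear_combination ((b₃ : ℂ) * V₁ - b₁ * V₃) / 2 * I_sq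
  rw [hX, normSq_half_mul_sub_I_mul]
  linear_combination (-2 * b₃ * (1 + V₃) * horth + b₃ ^ 2 * hV) / 4

end BjorlingData

theorem stmt_5 (b₁ b₂ b₃ V₁ V₂ V₃ : ℝ)
    (hV : V₁ ^ 2 + V₂ ^ 2 + V₃ ^ 2 = 1)
    (hb : ¬(b₁ = 0 ∧ b₂ = 0 ∧ b₃ = 0))
    (horth : b₁ * V₁ + b₂ * V₂ + b₃ * V₃ = 0)
    (hV3 : V₃ ≠ 1) (hV3' : V₃ ≠ -1)
    (φ₁ φ₂ φ₃ : ℂ)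
    (hφ₁ : φ₁ = (1 / 2) * ((b₁ : ℂ) - Complex.I * ((b₂ * V₃ - b₃ * V₂ : ℝ) : ℂ)))
    (hφ₂ : φ₂ = (1 / 2) * ((b₂ : ℂ) - Complex.I * ((b₃ * V₁ - b₁ * V₃ : ℝ) : ℂ)))
    (hφ₃ : φ₃ = (1 / 2) * ((b₃ : ℂ) - Complex.I * ((b₁ * V₂ - b₂ * V₁ : ℝ) : ℂ))) :
    φ₁ - Complex.I * φ₂ ≠ 0 ∧ φ₃ ≠ 0 ∧
      φ₃ / (φ₁ - Complex.I * φ₂) = -((φ₁ + Complex.I * φ₂) / φ₃) ∧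
      ‖φ₃ / (φ₁ - Complex.I * φ₂)‖ ^ 2 = (1 - V₃) / (1 + V₃) ∧
      (‖φ₃ / (φ₁ - Complex.I * φ₂)‖ < 1 ↔ 0 < V₃) := by
  have hb₀ : 0 < b₁ ^ 2 + b₂ ^ 2 + b₃ ^ 2 := by
    contrapose! hb
    refine ⟨?_, ?_, ?_⟩ <;> nlinarith [sq_nonneg b₁, sq_nonneg b₂, sq_nonneg b₃]
  obtain ⟨hV₃_ge, hV₃_le⟩ := abs_le.mp
    ((sq_le_one_iff_abs_le_one V₃).mp (by nlinarith [sq_nonneg V₁, sq_nonneg V₂]))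
  have hplus : 0 < 1 + V₃ := by linarith [lt_of_le_of_ne hV₃_ge hV3'.symm]
  have hminus : 0 < 1 - V₃ := by linarith [lt_of_le_of_ne hV₃_le hV3]
  have hX := normSq_φ₁_sub_I_mul_φ₂_of_bjorling hV horth hφ₁ hφ₂
  have hY := normSq_φ₃_of_bjorling hV horth hφ₃
  have hXne : φ₁ - I * φ₂ ≠ 0 :=
    normSq_pos.mp (hX ▸ div_pos (mul_pos hb₀ (pow_pos hplus 2)) four_pos)
  have hYne : φ₃ ≠ 0 :=
    normSq_pos.mp (hY ▸ div_pos (mul_pos hb₀ (by nlinarith)) four_pos)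
  have hq : ‖φ₃ / (φ₁ - I * φ₂)‖ ^ 2 = (1 - V₃) / (1 + V₃) := by
    rw [norm_div, div_pow, Complex.sq_norm, Complex.sq_norm, hX, hY]
    field_simp
    ring
  exact ⟨hXne, hYne, div_sub_I_mul_eq_neg_add_I_mul_div
    (sq_add_sq_add_sq_eq_zero_of_bjorling hV horth hφ₁ hφ₂ hφ₃) hXne hYne, hq,
    lt_one_iff_pos_of_sq_eq (norm_nonneg _) hplus hq⟩
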